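/- arXiv:1604.00436 — 2 statements merged into one kernel-verified Lean document; each statement's English description precedes it below -/
import Mathlib

section
/- Let q be a prime with q ≥ 7, and let f(s) = s² − s + 1 over F_q. Let S = {s ∈ F_q \ {0,1} : f(s) is a nonzero square in F_q}. Then |S| = (q−7)/2 if −3 is a square in F_q, and |S| = (q−5)/2 if −3 is a nonsquare in F_q. -/
/-!
Completing the square turns the conic `y² = f s`, where `f s = s² - s + 1`, into the hyperbola
`u² - v² = -3` with `u = 2s - 1`, `v = 2y`; a hyperbola `u² - v² = d ≠ 0` has `q - 1` points,
parametrised by `t = u + v ∈ F_qˣ`. Counting the points of the conic fibrewise over `s`, each root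
of `f` contributes one point and each `s` with `f s` a nonzero square contributes two, so
`Z + 2N = q - 1`, where `Z ∈ {0, 2}` is the number of roots, `2` exactly when the discriminant `-3`
is a square. Discarding `s = 0, 1`, where `f s = 1`, leaves `N - 2` values.
-/

open Finset

theorem Finset.card_filter_ne_ne {α : Type*} [Fintype α] [DecidableEq α] {a b : α} (hab : a ≠ b)
    {P : α → Prop} [DecidablePred P] (ha : P a) (hb : P b) :
    #{s | s ≠ a ∧ s ≠ b ∧ P s} = #{s | P s} - 2 := by
  have hsplit : univ.filter (fun s => s ≠ a ∧ s ≠ b ∧ P s) = univ.filter P \ {a, b} := by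
    ext s
    simp only [mem_filter, mem_univ, true_and, mem_sdiff, mem_insert, mem_singleton]
    tauto
  rw [hsplit, card_sdiff_of_subset (by simp [insert_subset_iff, ha, hb]), card_pair hab]

namespace FiniteField

variable {F : Type*} [Field F] [Fintype F] [DecidableEq F]

theorem card_sq_eq [DecidablePred (IsSquare : F → Prop)] (hF : ringChar F ≠ 2) (c : F) :
    #{y : F | y ^ 2 = c} = if c = 0 then 1 else if IsSquare c then 2 else 0 := by
  have h := quadraticChar_card_sqrts hF c
  rw [Set.toFinset_ofPred] at h
  split_ifs with h0 hsq
  · subst h0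
    rw [quadraticChar_zero] at h
    omega
  · rw [(quadraticChar_one_iff_isSquare h0).mpr hsq] at h
    omega
  · rw [quadraticChar_neg_one_iff_not_isSquare.mpr hsq] at h
    omega

theorem card_sq_eq_apply [DecidablePred (IsSquare : F → Prop)] (hF : ringChar F ≠ 2)
    (g : F → F) :
    #{p : F × F | p.2 ^ 2 = g p.1} = #{s | g s = 0} + 2 * #{s | g s ≠ 0 ∧ IsSquare (g s)} := by
  have hfiber : ∀ s, #{y : F | y ^ 2 = g s} =
      (if g s = 0 then 1 else 0) + 2 * if g s ≠ 0 ∧ IsSquare (g s) then 1 else 0 := by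
    intro s
    rw [card_sq_eq hF]
    split_ifs <;> simp_all
  calc #{p : F × F | p.2 ^ 2 = g p.1}
      = ∑ s, #{y : F | y ^ 2 = g s} := by
        simp only [card_filter, Fintype.sum_prod_type]
    _ = #{s | g s = 0} + 2 * #{s | g s ≠ 0 ∧ IsSquare (g s)} := by
        simp only [hfiber, sum_add_distrib, ← mul_sum, card_filter]

theorem card_sq_sub_sq_eq (hF : ringChar F ≠ 2) {d : F} (hd : d ≠ 0) :
    #{p : F × F | p.1 ^ 2 - p.2 ^ 2 = d} = Fintype.card F - 1 := by
  have h2 := Ring.two_ne_zero hF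
  have hsum : ∀ p : F × F, p.1 ^ 2 - p.2 ^ 2 = d → p.1 + p.2 ≠ 0 := fun p hp h0 =>
    hd (by rw [← hp]; linear_combination (p.1 - p.2) * h0)
  rw [← card_univ, ← card_erase_of_mem (mem_univ (0 : F))]
  symm
  refine card_nbij' (fun t => ((t + d / t) / 2, (t - d / t) / 2)) (fun p => p.1 + p.2)
    (fun t ht => ?_) (fun p hp => ?_) (fun t ht => ?_) (fun p hp => ?_)
  · rw [mem_coe, mem_erase] at ht
    rw [mem_coe, mem_filter]
    refine ⟨mem_univ _, ?_⟩
    field_simp [ht.1]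
    ring
  · rw [mem_coe, mem_filter] at hp
    exact mem_erase.2 ⟨hsum p hp.2, mem_univ _⟩
  · rw [mem_coe, mem_erase] at ht
    field_simp [ht.1]
    ring
  · rw [mem_coe, mem_filter] at hp
    have hdiv : d / (p.1 + p.2) = p.1 - p.2 := by
      rw [div_eq_iff (hsum p hp.2), ← hp.2]
      ring
    ext <;> simp only [hdiv] <;> field_simp <;> ring

theorem card_sq_eq_quadratic (hF : ringChar F ≠ 2) {b c : F} (hdisc : discrim 1 b c ≠ 0) :
    #{p : F × F | p.2 ^ 2 = p.1 ^ 2 + b * p.1 + c} = Fintype.card F - 1 := by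
  have h2 := Ring.two_ne_zero hF
  rw [← card_sq_sub_sq_eq hF hdisc]
  refine card_nbij' (fun p => (2 * p.1 + b, 2 * p.2)) (fun p => ((p.1 - b) / 2, p.2 / 2))
    (fun p hp => ?_) (fun p hp => ?_) (fun p _ => ?_) (fun p _ => ?_)
  · rw [mem_coe, mem_filter] at hp ⊢
    refine ⟨mem_univ _, ?_⟩
    rw [discrim]
    linear_combination -4 * hp.2
  · rw [mem_coe, mem_filter] at hp ⊢
    refine ⟨mem_univ _, ?_⟩
    rw [discrim] at hp
    field_simp
    linear_combination -hp.2
  · ext <;> simp [h2]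
  · ext <;> simp [mul_div_cancel₀ _ h2]

theorem card_quadratic_eq_zero [DecidablePred (IsSquare : F → Prop)] (hF : ringChar F ≠ 2)
    {b c : F} (hdisc : discrim 1 b c ≠ 0) :
    #{s | s ^ 2 + b * s + c = 0} = if IsSquare (discrim 1 b c) then 2 else 0 := by
  have : NeZero (2 : F) := ⟨Ring.two_ne_zero hF⟩
  split_ifs with hsq
  · obtain ⟨r, hr⟩ := hsq
    have hr0 : r ≠ 0 := by
      rintro rfl
      exact hdisc (by rw [hr, mul_zero])
    have hroots : ({s | s ^ 2 + b * s + c = 0} : Finset F) =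
        {(-b + r) / (2 * 1), (-b - r) / (2 * 1)} := by
      ext s
      rw [mem_filter, mem_insert, mem_singleton, ← quadratic_eq_zero_iff one_ne_zero hr]
      simp [sq]
    rw [hroots, card_pair]
    intro h
    field_simp at h
    have h2r : 2 * r = 0 := by linear_combination h
    exact hr0 ((mul_eq_zero.1 h2r).resolve_left two_ne_zero)
  · rw [card_eq_zero, filter_eq_empty_iff]
    intro s _ hs
    refine quadratic_ne_zero_of_discrim_ne_sq (fun r hr => hsq ⟨r, by rw [hr, sq]⟩) s ?_
    linear_combination hs

end FiniteField

open scoped Classical in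
/-- For a prime `q ≥ 7`, the number of `s ∈ F_q \ {0,1}` such that `s² - s + 1` is a
nonzero square is `(q-7)/2` if `-3` is a square in `F_q`, and `(q-5)/2` otherwise. -/
theorem stmt2 (q : ℕ) [Fact q.Prime] (hq7 : 7 ≤ q) :
    (Finset.univ.filter fun s : ZMod q =>
        s ≠ 0 ∧ s ≠ 1 ∧ s ^ 2 - s + 1 ≠ 0 ∧ IsSquare (s ^ 2 - s + 1)).card =
      if IsSquare (-3 : ZMod q) then (q - 7) / 2 else (q - 5) / 2 := by
  have hF : ringChar (ZMod q) ≠ 2 := by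
    rw [ZMod.ringChar_zmod_n]
    omega
  have h3 : (-3 : ZMod q) ≠ 0 := by
    rw [neg_ne_zero, ← Nat.cast_ofNat, Ne, ZMod.natCast_eq_zero_iff]
    exact fun h => absurd (Nat.le_of_dvd (by norm_num) h) (by omega)
  have hdisc : discrim 1 (-1) 1 = (-3 : ZMod q) := by
    rw [discrim]
    norm_num
  have hcount := FiniteField.card_sq_eq_apply hF (fun s : ZMod q => s ^ 2 + -1 * s + 1)
  rw [FiniteField.card_sq_eq_quadratic hF (hdisc ▸ h3),
    FiniteField.card_quadratic_eq_zero hF (hdisc ▸ h3), hdisc, ZMod.card] at hcount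
  simp only [neg_one_mul, ← sub_eq_add_neg] at hcount
  rw [card_filter_ne_ne zero_ne_one (by norm_num) (by norm_num)]
  split_ifs at hcount ⊢ <;> omega
end

section
/- Let q be a prime with q ≥ 7. Define H₂(r,s) = r² + (6s² − 4s³ − 4s)·r + s⁴ over F_q. Then the set 𝔓 = {(r,s) ∈ F_q² : H₂(r,s) = 0, r ∉ {0,1}, s ∉ {0,1}} has cardinality q − 5. -/
/-!
Substituting `r = s² + 2s(s-1)t` turns `H₂(r, s)` into `(2s(s-1))² (t(t+2) - s(2t+1))`, so for
`s ∉ {0, 1}` the curve `H₂ = 0` corresponds to the conic `s(2t+1) = t(t+2)`, on which moreover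
`r = st²`. Away from characteristic 3 the conic is the graph of `s = t(t+2)/(2t+1)`, so
`t ↦ (st², s)` is a bijection from the field minus `{0, -2, 1, -1, -1/2}` onto the point set:
`t = -1/2` is the pole, and `s ∈ {0, 1}` exactly for `t ∈ {0, -2, 1, -1}`. The conditions
`r ∉ {0, 1}` then hold automatically.
-/

open Finset

theorem natCast_ne_zero_of_lt {q n : ℕ} (hn : 0 < n) (hq : n < q) : (n : ZMod q) ≠ 0 := by
  rw [Ne, ZMod.natCast_eq_zero_iff]
  exact Nat.not_dvd_of_pos_of_lt hn hq

variable {K : Type*} [Field K]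

def H₂ (r s : K) : K := r ^ 2 + (6 * s ^ 2 - 4 * s ^ 3 - 4 * s) * r + s ^ 4

theorem H₂_shear (s t : K) :
    H₂ (s ^ 2 + 2 * s * (s - 1) * t) s =
      (2 * s * (s - 1)) ^ 2 * (t * (t + 2) - s * (2 * t + 1)) := by
  unfold H₂; ring

section Conic

variable {s t : K}

theorem mul_sq_eq_of_conic (hc : s * (2 * t + 1) = t * (t + 2)) :
    s * t ^ 2 = s ^ 2 + 2 * s * (s - 1) * t := by
  linear_combination -s * hc

theorem H₂_mul_sq_eq_zero_of_conic (hc : s * (2 * t + 1) = t * (t + 2)) :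
    H₂ (s * t ^ 2) s = 0 := by
  rw [mul_sq_eq_of_conic hc, H₂_shear, hc, sub_self, mul_zero]

theorem conic_of_H₂_shear_eq_zero (hd : 2 * s * (s - 1) ≠ 0)
    (h : H₂ (s ^ 2 + 2 * s * (s - 1) * t) s = 0) : s * (2 * t + 1) = t * (t + 2) := by
  rw [H₂_shear, mul_eq_zero, sub_eq_zero] at h
  exact (h.resolve_left (pow_ne_zero 2 hd)).symm

-- At `t = -1/2` the conic would give `t(t+2) = -3/4 = 0`.
theorem two_mul_add_one_ne_zero_of_conic (h3 : (3 : K) ≠ 0)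
    (hc : s * (2 * t + 1) = t * (t + 2)) : 2 * t + 1 ≠ 0 := by
  intro h
  exact h3 (by linear_combination (2 * t + 3 - 4 * s) * h + 4 * hc)

theorem eq_zero_iff_of_conic (h3 : (3 : K) ≠ 0) (hc : s * (2 * t + 1) = t * (t + 2)) :
    s = 0 ↔ t = 0 ∨ t = -2 := by
  have ht := two_mul_add_one_ne_zero_of_conic h3 hc
  rw [← mul_left_inj' ht, zero_mul, hc, mul_eq_zero, add_eq_zero_iff_eq_neg]

theorem eq_one_iff_of_conic (h3 : (3 : K) ≠ 0) (hc : s * (2 * t + 1) = t * (t + 2)) :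
    s = 1 ↔ t = 1 ∨ t = -1 := by
  have ht := two_mul_add_one_ne_zero_of_conic h3 hc
  rw [← mul_left_inj' ht, one_mul, hc, ← mul_self_eq_one_iff]
  constructor <;> intro h <;> linear_combination h

theorem eq_one_or_eq_neg_one_of_conic_of_mul_sq_eq_one (hc : s * (2 * t + 1) = t * (t + 2))
    (h : s * t ^ 2 = 1) : t = 1 ∨ t = -1 := by
  have : (t - 1) * (t + 1) ^ 3 = 0 := by linear_combination -t ^ 2 * hc + (2 * t + 1) * h
  rcases mul_eq_zero.1 this with h | h
  · exact Or.inl (sub_eq_zero.1 h)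
  · exact Or.inr (eq_neg_of_add_eq_zero_left (pow_eq_zero_iff three_ne_zero |>.1 h))

end Conic

def conicParam (t : K) : K := t * (t + 2) / (2 * t + 1)

def curveParam (t : K) : K × K := (conicParam t * t ^ 2, conicParam t)

def curveCoord (p : K × K) : K := (p.1 - p.2 ^ 2) / (2 * p.2 * (p.2 - 1))

theorem conic_conicParam {t : K} (ht : 2 * t + 1 ≠ 0) :
    conicParam t * (2 * t + 1) = t * (t + 2) :=
  div_mul_cancel₀ _ ht

theorem conicParam_eq_of_conic {s t : K} (h3 : (3 : K) ≠ 0)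
    (hc : s * (2 * t + 1) = t * (t + 2)) : conicParam t = s :=
  div_eq_of_eq_mul (two_mul_add_one_ne_zero_of_conic h3 hc) hc.symm

theorem two_mul_mul_sub_one_ne_zero {s : K} (h2 : (2 : K) ≠ 0) (hs0 : s ≠ 0) (hs1 : s ≠ 1) :
    2 * s * (s - 1) ≠ 0 :=
  mul_ne_zero (mul_ne_zero h2 hs0) (sub_ne_zero.2 hs1)

theorem shear_curveCoord {r s : K} (hd : 2 * s * (s - 1) ≠ 0) :
    s ^ 2 + 2 * s * (s - 1) * curveCoord (r, s) = r := by
  rw [curveCoord, mul_div_cancel₀ _ hd, add_sub_cancel]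

theorem conic_curveCoord {r s : K} (hd : 2 * s * (s - 1) ≠ 0) (h : H₂ r s = 0) :
    s * (2 * curveCoord (r, s) + 1) = curveCoord (r, s) * (curveCoord (r, s) + 2) :=
  conic_of_H₂_shear_eq_zero hd (by rwa [shear_curveCoord hd])

theorem curveCoord_curveParam {t : K} (ht : 2 * t + 1 ≠ 0)
    (hd : 2 * conicParam t * (conicParam t - 1) ≠ 0) : curveCoord (curveParam t) = t := by
  rw [curveParam, curveCoord, mul_sq_eq_of_conic (conic_conicParam ht), add_sub_cancel_left,
    mul_div_cancel_left₀ _ hd]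

theorem curveParam_curveCoord {r s : K} (h2 : (2 : K) ≠ 0) (h3 : (3 : K) ≠ 0) (hs0 : s ≠ 0)
    (hs1 : s ≠ 1) (h : H₂ r s = 0) : curveParam (curveCoord (r, s)) = (r, s) := by
  have hd := two_mul_mul_sub_one_ne_zero h2 hs0 hs1
  have hc := conic_curveCoord hd h
  rw [curveParam, conicParam_eq_of_conic h3 hc, mul_sq_eq_of_conic hc, shear_curveCoord hd]

section Counting

variable [DecidableEq K]

def curveParamExceptions : Finset K := {0, -2, 1, -1, -2⁻¹}

theorem card_curveParamExceptions (h2 : (2 : K) ≠ 0) (h3 : (3 : K) ≠ 0) :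
    #(curveParamExceptions : Finset K) = 5 := by
  rw [curveParamExceptions, card_insert_of_notMem, card_insert_of_notMem, card_insert_of_notMem,
    card_pair] <;> simp only [mem_insert, mem_singleton, not_or, ne_eq] <;> grind

theorem mem_curveParamExceptions (h2 : (2 : K) ≠ 0) {t : K} :
    t ∈ curveParamExceptions ↔ (t = 0 ∨ t = -2) ∨ (t = 1 ∨ t = -1) ∨ 2 * t + 1 = 0 := by
  simp only [curveParamExceptions, mem_insert, mem_singleton]
  grind

theorem notMem_curveParamExceptions_iff (h2 : (2 : K) ≠ 0) (h3 : (3 : K) ≠ 0) {t : K} :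
    t ∉ curveParamExceptions ↔ 2 * t + 1 ≠ 0 ∧ conicParam t ≠ 0 ∧ conicParam t ≠ 1 := by
  rw [mem_curveParamExceptions h2]
  by_cases ht : 2 * t + 1 = 0
  · simp [ht]
  · have hc := conic_conicParam ht
    simp only [ne_eq, eq_zero_iff_of_conic h3 hc, eq_one_iff_of_conic h3 hc]
    tauto

theorem card_H₂_points [Fintype K] (h2 : (2 : K) ≠ 0) (h3 : (3 : K) ≠ 0) :
    #{p : K × K | H₂ p.1 p.2 = 0 ∧ p.1 ≠ 0 ∧ p.1 ≠ 1 ∧ p.2 ≠ 0 ∧ p.2 ≠ 1} =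
      Fintype.card K - 5 := by
  rw [← card_curveParamExceptions h2 h3, ← card_compl]
  refine card_nbij' curveCoord curveParam ?_ ?_ ?_ ?_ <;>
    simp only [Set.MapsTo, Set.LeftInvOn, coe_filter, coe_compl, mem_coe, Set.mem_compl_iff,
      mem_univ, true_and, Set.mem_ofPred_eq, notMem_curveParamExceptions_iff h2 h3, Prod.forall]
  · rintro r s ⟨h, -, -, hs0, hs1⟩
    have hc := conic_curveCoord (two_mul_mul_sub_one_ne_zero h2 hs0 hs1) h
    rw [conicParam_eq_of_conic h3 hc]
    exact ⟨two_mul_add_one_ne_zero_of_conic h3 hc, hs0, hs1⟩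
  · rintro t ⟨ht, hs0, hs1⟩
    have hc := conic_conicParam ht
    simp only [curveParam]
    refine ⟨H₂_mul_sq_eq_zero_of_conic hc, mul_ne_zero hs0 (pow_ne_zero 2 fun h => ?_),
      fun h => hs1 ?_, hs0, hs1⟩
    · exact hs0 ((eq_zero_iff_of_conic h3 hc).2 (Or.inl h))
    · exact (eq_one_iff_of_conic h3 hc).2 (eq_one_or_eq_neg_one_of_conic_of_mul_sq_eq_one hc h)
  · rintro r s ⟨h, -, -, hs0, hs1⟩
    exact curveParam_curveCoord h2 h3 hs0 hs1 h
  · rintro t ⟨ht, hs0, hs1⟩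
    exact curveCoord_curveParam ht (two_mul_mul_sub_one_ne_zero h2 hs0 hs1)

end Counting

open scoped Classical in
/-- For a prime `q ≥ 7`, the set of pairs `(r,s)` with `r,s ∉ {0,1}` and
`H₂(r,s) = r² + (6s² - 4s³ - 4s)r + s⁴ = 0` has cardinality `q - 5`. -/
theorem stmt3 (q : ℕ) [Fact q.Prime] (hq7 : 7 ≤ q) :
    (Finset.univ.filter fun p : ZMod q × ZMod q =>
        p.1 ^ 2 + (6 * p.2 ^ 2 - 4 * p.2 ^ 3 - 4 * p.2) * p.1 + p.2 ^ 4 = 0 ∧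
          p.1 ≠ 0 ∧ p.1 ≠ 1 ∧ p.2 ≠ 0 ∧ p.2 ≠ 1).card = q - 5 := by
  have h2 : (2 : ZMod q) ≠ 0 := by exact_mod_cast natCast_ne_zero_of_lt two_pos (by omega)
  have h3 : (3 : ZMod q) ≠ 0 := by exact_mod_cast natCast_ne_zero_of_lt three_pos (by omega)
  have hcard := card_H₂_points h2 h3
  rwa [ZMod.card] at hcard
end
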